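/- arXiv:1611.03204 — 12 statements merged into one kernel-verified Lean document; each statement's English description precedes it below -/
import Mathlib

section
/- Let S, M ⊆ K be keyword sets with S ∩ M ≠ ∅, with nonnegative subscription weights wt_s and message weights wt_m satisfying wt_m(w) ≤ 1 for all w, and let λ ∈ ℝ. If wtsum_s(w) < λ for every common keyword w ∈ S ∩ M, then TSim(S,M) < λ. (Location-aware prefix filtering: if the location-aware prefix of s, consisting of the keywords w ∈ S with wtsum_s(w) ≥ λ, shares no keyword with M, then the textual similarity is below λ; Lemmas 2 and 3.) -/
open Finset

/-- Textual similarity: `TSim(S,M) = Σ_{w ∈ S ∩ M} wt_s(w)·wt_m(w)`. -/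
noncomputable def TSim {K : Type*} [LinearOrder K]
    (S M : Finset K) (wts wtm : K → ℝ) : ℝ :=
  ∑ w ∈ S ∩ M, wts w * wtm w

/-- `wtsum_s(w) = Σ_{w' ∈ S, w ≤ w'} wt_s(w')`. -/
noncomputable def wtsum {K : Type*} [LinearOrder K]
    (S : Finset K) (wts : K → ℝ) (w : K) : ℝ :=
  ∑ w' ∈ S.filter (fun w' => w ≤ w'), wts w'

/-- Lemmas 2 and 3 (location-aware prefix filtering): if every common keyword `w`
of `S` and `M` has `wtsum_s(w) < λ` (i.e. the location-aware prefix of `s` shares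
no keyword with `M`), then `TSim(S,M) < λ`. -/
theorem location_aware_prefix_filtering {K : Type*} [LinearOrder K]
    (S M : Finset K) (wts wtm : K → ℝ)
    (hne : (S ∩ M).Nonempty)
    (hs : ∀ w, 0 ≤ wts w) (hm0 : ∀ w, 0 ≤ wtm w) (hm1 : ∀ w, wtm w ≤ 1)
    (lam : ℝ)
    (h : ∀ w ∈ S ∩ M, wtsum S wts w < lam) :
    TSim S M wts wtm < lam := by
  obtain ⟨w0, hw0⟩ := hne
  have hmin : (S ∩ M).min' ⟨w0, hw0⟩ ∈ S ∩ M := Finset.min'_mem _ _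
  set m := (S ∩ M).min' ⟨w0, hw0⟩ with hm
  calc TSim S M wts wtm ≤ ∑ w ∈ S ∩ M, wts w := by
        apply Finset.sum_le_sum
        intro w _
        calc wts w * wtm w ≤ wts w * 1 :=
              mul_le_mul_of_nonneg_left (hm1 w) (hs w)
          _ = wts w := mul_one _
    _ ≤ wtsum S wts m := by
        apply Finset.sum_le_sum_of_subset_of_nonneg
        · intro w hw
          simp only [Finset.mem_filter]
          exact ⟨(Finset.mem_inter.mp hw).1, Finset.min'_le _ _ hw⟩
        · intro w _ _; exact hs w
    _ < lam := h m hmin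
end

section
/- Let S, M ⊆ K be keyword sets with S ∩ M ≠ ∅ and nonnegative weights wt_s, wt_m, and let λ ∈ ℝ. If wtsum_s(w)·maxwt_m(w) < λ for every common keyword w ∈ S ∩ M, then TSim(S,M) < λ. (Max-weight refined location-aware prefix filtering: if the refined location-aware prefix of s with respect to m shares no keyword with M, then the textual similarity is below λ; Theorem 1.) -/
open Finset

/-- `maxwt_s(w) = max_{w' ∈ S, w ≤ w'} wt_s(w')`, taken to be `0` if no such `w'` exists. -/
noncomputable def maxwt {K : Type*} [LinearOrder K]
    (S : Finset K) (wts : K → ℝ) (w : K) : ℝ :=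
  (S.filter (fun w' => w ≤ w')).fold max 0 wts

/-- Theorem 1 (max-weight refined location-aware prefix filtering): if every common
keyword `w` of `S` and `M` has `wtsum_s(w)·maxwt_m(w) < λ` (i.e. the refined
location-aware prefix of `s` w.r.t. `m` shares no keyword with `M`), then
`TSim(S,M) < λ`. -/
theorem refined_location_aware_prefix_filtering {K : Type*} [LinearOrder K]
    (S M : Finset K) (wts wtm : K → ℝ)
    (hne : (S ∩ M).Nonempty)
    (hs : ∀ w, 0 ≤ wts w) (hm : ∀ w, 0 ≤ wtm w)
    (lam : ℝ)
    (h : ∀ w ∈ S ∩ M, wtsum S wts w * maxwt M wtm w < lam) :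
    TSim S M wts wtm < lam := by
  obtain ⟨w0, hw0⟩ := hne
  set w0' := (S ∩ M).min' ⟨w0, hw0⟩ with hw0'
  have hmem : w0' ∈ S ∩ M := (S ∩ M).min'_mem _
  have hmin : ∀ w ∈ S ∩ M, w0' ≤ w := fun w hw => (S ∩ M).min'_le w hw
  have hkey : TSim S M wts wtm ≤ wtsum S wts w0' * maxwt M wtm w0' := by
    have hmax : ∀ w ∈ S ∩ M, wtm w ≤ maxwt M wtm w0' := by
      intro w hw
      unfold maxwt
      apply (Finset.le_fold_max _).mpr
      exact Or.inr ⟨w, Finset.mem_filter.mpr ⟨(Finset.mem_inter.mp hw).2, hmin w hw⟩, le_rfl⟩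
    have h0max : 0 ≤ maxwt M wtm w0' := by
      unfold maxwt; exact (Finset.le_fold_max _).mpr (Or.inl le_rfl)
    calc TSim S M wts wtm ≤ ∑ w ∈ S ∩ M, wts w * maxwt M wtm w0' := by
          apply Finset.sum_le_sum
          intro w hw
          exact mul_le_mul_of_nonneg_left (hmax w hw) (hs w)
      _ = (∑ w ∈ S ∩ M, wts w) * maxwt M wtm w0' := by rw [Finset.sum_mul]
      _ ≤ wtsum S wts w0' * maxwt M wtm w0' := by
          apply mul_le_mul_of_nonneg_right _ h0max
          apply Finset.sum_le_sum_of_subset_of_nonneg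
          · intro w hw
            exact Finset.mem_filter.mpr ⟨(Finset.mem_inter.mp hw).1, hmin w hw⟩
          · intros; exact hs _
  exact lt_of_le_of_lt hkey (h w0' hmem)
end

section
/- Let S, M ⊆ K be keyword sets with nonnegative weights wt_s, wt_m, and let w* ∈ K be any keyword. Then TSim(S,M) ≤ Σ_{w ∈ S ∩ M, w < w*} wt_s(w)·wt_m(w) + min( wtsum_s(w*)·maxwt_m(w*), wtsum_m(w*)·maxwt_s(w*) ). Consequently, for any λ ∈ ℝ, if the already-computed partial similarity over common keywords smaller than w* plus the upper bound min(wtsum_s(w*)·maxwt_m(w*), wtsum_m(w*)·maxwt_s(w*)) on the contribution of the unseen keywords (those ≥ w*) is strictly less than λ, then TSim(S,M) < λ. (Bound estimation for unseen keywords; Theorem 2.) -/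
open Finset

/-
Split `TSim(S,M)` at `w*`. On the unseen keywords `w ≥ w*` of `S ∩ M` each factor `wt_m(w)` is
at most `maxwt_m(w*)`, and dropping the condition `w ∈ M` only adds nonnegative terms, so their
contribution is at most `wtsum_s(w*)·maxwt_m(w*)`; exchanging the roles of `S` and `M` gives the
other term of the minimum.
-/

section UnseenKeywords

variable {K : Type*} [LinearOrder K]

lemma zero_le_maxwt (S : Finset K) (wts : K → ℝ) (w : K) : 0 ≤ maxwt S wts w :=
  (le_fold_max _).mpr (Or.inl le_rfl)

lemma le_maxwt {S : Finset K} {wts : K → ℝ} {w a : K} (ha : a ∈ S) (hwa : w ≤ a) :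
    wts a ≤ maxwt S wts w :=
  (le_fold_max _).mpr (Or.inr ⟨a, mem_filter.mpr ⟨ha, hwa⟩, le_rfl⟩)

lemma TSim_eq_sum_lt_add_sum_ge (S M : Finset K) (wts wtm : K → ℝ) (wstar : K) :
    TSim S M wts wtm =
      (∑ w ∈ (S ∩ M).filter (fun w => w < wstar), wts w * wtm w) +
        ∑ w ∈ (S ∩ M).filter (fun w => wstar ≤ w), wts w * wtm w := by
  simp only [TSim, ← not_lt]
  exact (sum_filter_add_sum_filter_not _ _ _).symm

lemma sum_ge_le_wtsum_mul_maxwt (S M : Finset K) (wts wtm : K → ℝ) (hs : ∀ w, 0 ≤ wts w)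
    (wstar : K) :
    ∑ w ∈ (S ∩ M).filter (fun w => wstar ≤ w), wts w * wtm w ≤
      wtsum S wts wstar * maxwt M wtm wstar := by
  rw [wtsum, sum_mul]
  calc ∑ w ∈ (S ∩ M).filter (fun w => wstar ≤ w), wts w * wtm w
      ≤ ∑ w ∈ (S ∩ M).filter (fun w => wstar ≤ w), wts w * maxwt M wtm wstar := by
        refine sum_le_sum fun w hw => ?_
        obtain ⟨hwSM, hw⟩ := mem_filter.mp hw
        exact mul_le_mul_of_nonneg_left (le_maxwt (mem_inter.mp hwSM).2 hw) (hs w)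
    _ ≤ ∑ w ∈ S.filter (fun w => wstar ≤ w), wts w * maxwt M wtm wstar :=
        sum_le_sum_of_subset_of_nonneg (filter_subset_filter _ inter_subset_left)
          fun w _ _ => mul_nonneg (hs w) (zero_le_maxwt M wtm wstar)

lemma sum_ge_le_min (S M : Finset K) (wts wtm : K → ℝ) (hs : ∀ w, 0 ≤ wts w)
    (hm : ∀ w, 0 ≤ wtm w) (wstar : K) :
    ∑ w ∈ (S ∩ M).filter (fun w => wstar ≤ w), wts w * wtm w ≤
      min (wtsum S wts wstar * maxwt M wtm wstar) (wtsum M wtm wstar * maxwt S wts wstar) := by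
  refine le_min (sum_ge_le_wtsum_mul_maxwt S M wts wtm hs wstar) ?_
  simpa only [inter_comm M S, mul_comm] using sum_ge_le_wtsum_mul_maxwt M S wtm wts hm wstar

end UnseenKeywords

/-- Theorem 2 (bound estimation for unseen keywords): the textual similarity is at
most the partial similarity over common keywords smaller than `w*` plus the bound
`min(wtsum_s(w*)·maxwt_m(w*), wtsum_m(w*)·maxwt_s(w*))` on the contribution of the
unseen keywords (those `≥ w*`); consequently if this quantity is strictly below `λ`,
then `TSim(S,M) < λ`. -/
theorem unseen_keywords_bound_estimation {K : Type*} [LinearOrder K]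
    (S M : Finset K) (wts wtm : K → ℝ)
    (hs : ∀ w, 0 ≤ wts w) (hm : ∀ w, 0 ≤ wtm w)
    (wstar : K) :
    TSim S M wts wtm ≤
      (∑ w ∈ (S ∩ M).filter (fun w => w < wstar), wts w * wtm w) +
        min (wtsum S wts wstar * maxwt M wtm wstar)
            (wtsum M wtm wstar * maxwt S wts wstar) ∧
    ∀ lam : ℝ,
      (∑ w ∈ (S ∩ M).filter (fun w => w < wstar), wts w * wtm w) +
          min (wtsum S wts wstar * maxwt M wtm wstar)
              (wtsum M wtm wstar * maxwt S wts wstar) < lam →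
      TSim S M wts wtm < lam := by
  have hbound : TSim S M wts wtm ≤
      (∑ w ∈ (S ∩ M).filter (fun w => w < wstar), wts w * wtm w) +
        min (wtsum S wts wstar * maxwt M wtm wstar)
            (wtsum M wtm wstar * maxwt S wts wstar) := by
    rw [TSim_eq_sum_lt_add_sum_ge S M wts wtm wstar]
    exact add_le_add_right (sum_ge_le_min S M wts wtm hs hm wstar) _
  exact ⟨hbound, fun _ hlam => hbound.trans_lt hlam⟩
end

section
/- Let S, M ⊆ K be keyword sets with S ∩ M ≠ ∅ and nonnegative weights wt_s, wt_m, and let λ ∈ ℝ. If wtsum_m(w)·maxwt_s(w) < λ for every common keyword w ∈ S ∩ M, then TSim(S,M) < λ. (Refined subscription-dependent prefix filtering: if the refined subscription-dependent prefix of the message m with respect to s shares no keyword with S, then the textual similarity is below λ; Lemma 4.) -/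
open Finset

/-- Lemma 4 (refined subscription-dependent prefix filtering): if every common
keyword `w` of `S` and `M` has `wtsum_m(w)·maxwt_s(w) < λ` (i.e. the refined
subscription-dependent prefix of the message `m` w.r.t. `s` shares no keyword
with `S`), then `TSim(S,M) < λ`. -/
theorem refined_sub_dependent_prefix_filtering {K : Type*} [LinearOrder K]
    (S M : Finset K) (wts wtm : K → ℝ)
    (hne : (S ∩ M).Nonempty)
    (hs : ∀ w, 0 ≤ wts w) (hm : ∀ w, 0 ≤ wtm w)
    (lam : ℝ)
    (h : ∀ w ∈ S ∩ M, wtsum M wtm w * maxwt S wts w < lam) :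
    TSim S M wts wtm < lam := by
  have hw0 : (S ∩ M).min' hne ∈ S ∩ M := Finset.min'_mem _ hne
  set w0 := (S ∩ M).min' hne with hw0def
  have hmaxle : ∀ w ∈ S ∩ M, wts w ≤ maxwt S wts w0 := by
    intro w hw
    refine (Finset.le_fold_max _).mpr (Or.inr ⟨w, ?_, le_rfl⟩)
    simp only [Finset.mem_filter]
    exact ⟨(Finset.mem_inter.mp hw).1, Finset.min'_le _ _ hw⟩
  have hmax0 : 0 ≤ maxwt S wts w0 := (Finset.le_fold_max _).mpr (Or.inl le_rfl)
  have hsum : ∑ w ∈ S ∩ M, wtm w ≤ wtsum M wtm w0 := by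
    apply Finset.sum_le_sum_of_subset_of_nonneg
    · intro w hw
      simp only [Finset.mem_filter]
      exact ⟨(Finset.mem_inter.mp hw).2, Finset.min'_le _ _ hw⟩
    · intro w _ _; exact hm w
  calc TSim S M wts wtm ≤ ∑ w ∈ S ∩ M, maxwt S wts w0 * wtm w := by
        refine Finset.sum_le_sum fun w hw => ?_
        exact mul_le_mul_of_nonneg_right (hmaxle w hw) (hm w)
    _ = maxwt S wts w0 * ∑ w ∈ S ∩ M, wtm w := by rw [Finset.mul_sum]
    _ ≤ maxwt S wts w0 * wtsum M wtm w0 := mul_le_mul_of_nonneg_left hsum hmax0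
    _ = wtsum M wtm w0 * maxwt S wts w0 := mul_comm _ _
    _ < lam := h w0 hw0
end

section
/- Let G be a finite nonempty set of subscriptions, each s ∈ G having a keyword set S_s ⊆ K with nonnegative weights wt_s and a textual similarity threshold λ(s) ∈ ℝ; let M ⊆ K be a message keyword set with nonnegative weights wt_m, and let w be a keyword such that for every s ∈ G, w is the smallest keyword of S_s ∩ M (in particular w ∈ S_s ∩ M for every s ∈ G). If max_{s ∈ G} maxwt_s(w) · wtsum_m(w) < min_{s ∈ G} λ(s), then TSim(S_s, M) < λ(s) for every s ∈ G, i.e., the whole group G can be skipped. (Group pruning; Lemma 5.) -/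
open Finset

/-- Lemma 5 (group pruning): if `G` is a nonempty finite group of subscriptions and
`w` is, for every `s ∈ G`, the smallest common keyword of `S_s` and `M`, and if
`max_{s ∈ G} maxwt_s(w) · wtsum_m(w) < min_{s ∈ G} λ(s)`, then every subscription in
the group satisfies `TSim(S_s, M) < λ(s)`, i.e. the whole group can be skipped. -/
theorem group_pruning {K ι : Type*} [LinearOrder K]
    (G : Finset ι) (hG : G.Nonempty)
    (Ssub : ι → Finset K) (wts : ι → K → ℝ) (lam : ι → ℝ)
    (M : Finset K) (wtm : K → ℝ)
    (hs : ∀ s w, 0 ≤ wts s w) (hm : ∀ w, 0 ≤ wtm w)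
    (w : K)
    (hw : ∀ s ∈ G, w ∈ Ssub s ∩ M ∧ ∀ w' ∈ Ssub s ∩ M, w ≤ w')
    (hcond : G.sup' hG (fun s => maxwt (Ssub s) (wts s) w) * wtsum M wtm w <
      G.inf' hG lam) :
    ∀ s ∈ G, TSim (Ssub s) M (wts s) wtm < lam s := by
  intro s hsG
  obtain ⟨hwmem, hmin⟩ := hw s hsG
  have hmw0 : 0 ≤ maxwt (Ssub s) (wts s) w :=
    (Finset.le_fold_max _).mpr (Or.inl le_rfl)
  have hws0 : 0 ≤ wtsum M wtm w := Finset.sum_nonneg fun x _ => hm x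
  have h1 : TSim (Ssub s) M (wts s) wtm ≤ maxwt (Ssub s) (wts s) w * wtsum M wtm w := by
    calc TSim (Ssub s) M (wts s) wtm
        ≤ ∑ w' ∈ Ssub s ∩ M, maxwt (Ssub s) (wts s) w * wtm w' := by
          refine Finset.sum_le_sum fun w' hw' => mul_le_mul_of_nonneg_right ?_ (hm w')
          exact (Finset.le_fold_max _).mpr (Or.inr ⟨w',
            Finset.mem_filter.mpr ⟨(Finset.mem_inter.mp hw').1, hmin w' hw'⟩, le_rfl⟩)
      _ = maxwt (Ssub s) (wts s) w * ∑ w' ∈ Ssub s ∩ M, wtm w' := by rw [Finset.mul_sum]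
      _ ≤ maxwt (Ssub s) (wts s) w * wtsum M wtm w := by
          refine mul_le_mul_of_nonneg_left ?_ hmw0
          refine Finset.sum_le_sum_of_subset_of_nonneg ?_ (fun x _ _ => hm x)
          intro x hx
          exact Finset.mem_filter.mpr ⟨(Finset.mem_inter.mp hx).2, hmin x hx⟩
  have h2 : maxwt (Ssub s) (wts s) w * wtsum M wtm w ≤
      G.sup' hG (fun s => maxwt (Ssub s) (wts s) w) * wtsum M wtm w :=
    mul_le_mul_of_nonneg_right (Finset.le_sup' (fun s => maxwt (Ssub s) (wts s) w) hsG) hws0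
  have h3 : G.inf' hG lam ≤ lam s := Finset.inf'_le _ hsG
  linarith
end

section
/- Let G be a finite nonempty set of subscriptions, each s ∈ G having a keyword set S_s ⊆ K with nonnegative weights wt_s, a real value kScore*(s), and a nonnegative real value α*(s); let U ≥ 0 be a real number (the outer spatial bound of the cell with respect to the message); let M ⊆ K be a message keyword set with nonnegative weights wt_m, and let w be a keyword such that for every s ∈ G, w is the smallest keyword of S_s ∩ M. Write kScore*(G) = min_{s ∈ G} kScore*(s) and G.α* = max_{s ∈ G} α*(s). If max_{s ∈ G} maxwt_s(w) · wtsum_m(w) < kScore*(G) − G.α* · U, then TSim(S_s, M) < kScore*(s) − α*(s)·U for every s ∈ G, i.e., the whole group G can be skipped. (Group skipping under α-partition; Theorem 3.) -/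
open Finset

/-- Theorem 3 (group skipping under α-partition): with `kScore*(G) = min_{s ∈ G} kScore*(s)`
and `G.α* = max_{s ∈ G} α*(s)`, if `w` is the smallest common keyword of `S_s` and `M`
for every `s ∈ G` and `max_{s ∈ G} maxwt_s(w) · wtsum_m(w) < kScore*(G) − G.α* · U`,
then `TSim(S_s, M) < kScore*(s) − α*(s)·U` for every `s ∈ G`, i.e. the whole group
can be skipped. -/
theorem group_skipping_alpha_partition {K ι : Type*} [LinearOrder K]
    (G : Finset ι) (hG : G.Nonempty)
    (Ssub : ι → Finset K) (wts : ι → K → ℝ)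
    (kS αstar : ι → ℝ) (hαstar : ∀ s, 0 ≤ αstar s)
    (U : ℝ) (hU : 0 ≤ U)
    (M : Finset K) (wtm : K → ℝ)
    (hs : ∀ s w, 0 ≤ wts s w) (hm : ∀ w, 0 ≤ wtm w)
    (w : K)
    (hw : ∀ s ∈ G, w ∈ Ssub s ∩ M ∧ ∀ w' ∈ Ssub s ∩ M, w ≤ w')
    (hcond : G.sup' hG (fun s => maxwt (Ssub s) (wts s) w) * wtsum M wtm w <
      G.inf' hG kS - G.sup' hG αstar * U) :
    ∀ s ∈ G, TSim (Ssub s) M (wts s) wtm < kS s - αstar s * U := by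
  intro s hsG
  set A := maxwt (Ssub s) (wts s) w with hA
  have hA0 : 0 ≤ A := by
    rw [hA, maxwt, Finset.le_fold_max]
    exact Or.inl le_rfl
  have hB0 : 0 ≤ wtsum M wtm w :=
    Finset.sum_nonneg fun x _ => hm x
  -- TSim ≤ A * wtsum
  have h1 : TSim (Ssub s) M (wts s) wtm ≤ A * wtsum M wtm w := by
    rw [TSim, wtsum, Finset.mul_sum]
    refine Finset.sum_le_sum_of_subset_of_nonneg ?_ (fun x _ _ => mul_nonneg hA0 (hm x))
      |>.trans' (Finset.sum_le_sum ?_)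
    · intro x hx
      rw [Finset.mem_filter]
      exact ⟨(Finset.mem_inter.1 hx).2, (hw s hsG).2 x hx⟩
    · intro x hx
      have hle : wts s x ≤ A := by
        rw [hA, maxwt, Finset.le_fold_max]
        exact Or.inr ⟨x, Finset.mem_filter.2 ⟨(Finset.mem_inter.1 hx).1,
          (hw s hsG).2 x hx⟩, le_rfl⟩
      exact mul_le_mul_of_nonneg_right hle (hm x)
  -- A ≤ sup
  have h2 : A ≤ G.sup' hG (fun s => maxwt (Ssub s) (wts s) w) :=
    Finset.le_sup' (fun t => maxwt (Ssub t) (wts t) w) hsG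
  have h3 : A * wtsum M wtm w ≤
      G.sup' hG (fun s => maxwt (Ssub s) (wts s) w) * wtsum M wtm w :=
    mul_le_mul_of_nonneg_right h2 hB0
  have h4 : G.inf' hG kS - G.sup' hG αstar * U ≤ kS s - αstar s * U := by
    have := Finset.inf'_le kS hsG
    have h5 : αstar s ≤ G.sup' hG αstar := Finset.le_sup' _ hsG
    nlinarith [mul_le_mul_of_nonneg_right h5 hU]
  linarith
end

section
/- Let G be a finite set of subscriptions, each s ∈ G having a keyword set S_s ⊆ K with nonnegative weights wt_s, a real value kScore*(s) and a nonnegative real value α*(s); let U ≥ 0 be a real number, M ⊆ K a message keyword set with nonnegative weights wt_m, and w a keyword with w ∈ S_s for all s ∈ G. Fix ŝ ∈ G and define G[ŝ] = {s ∈ G : kScore*(s) ≥ kScore*(ŝ)}, maxwt(G[ŝ]) = max_{s ∈ G[ŝ]} maxwt_s(w), and G[ŝ].α* = max_{s ∈ G[ŝ]} α*(s). If maxwt(G[ŝ]) · wtsum_m(w) < kScore*(ŝ) − G[ŝ].α* · U, then maxwt_s(w) · wtsum_m(w) < kScore*(s) − α*(s)·U for every s ∈ G[ŝ]; consequently, for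 every s ∈ G[ŝ] for which w is the smallest keyword of S_s ∩ M, TSim(S_s, M) < kScore*(s) − α*(s)·U, i.e., no subscription after ŝ (in increasing kScore* order, ŝ included) needs to be checked. (Early termination within a group; Theorem 4.) -/
open Finset

lemma maxwt_nonneg {K : Type*} [LinearOrder K] (S : Finset K) (wts : K → ℝ)
    (w : K) : 0 ≤ maxwt S wts w :=
  (Finset.le_fold_max _).mpr (Or.inl le_rfl)

lemma le_maxwt_s7 {K : Type*} [LinearOrder K] {S : Finset K} (wts : K → ℝ)
    {w w' : K} (h1 : w' ∈ S) (h2 : w ≤ w') : wts w' ≤ maxwt S wts w :=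
  (Finset.le_fold_max _).mpr (Or.inr ⟨w', Finset.mem_filter.mpr ⟨h1, h2⟩, le_rfl⟩)

lemma wtsum_nonneg {K : Type*} [LinearOrder K] (M : Finset K) (wtm : K → ℝ)
    (hm : ∀ w, 0 ≤ wtm w) (w : K) : 0 ≤ wtsum M wtm w :=
  Finset.sum_nonneg fun _ _ => hm _

/-- Theorem 4 (early termination within a group): with `G[ŝ] = {s ∈ G : kScore*(s) ≥ kScore*(ŝ)}`,
`maxwt(G[ŝ]) = max_{s ∈ G[ŝ]} maxwt_s(w)` and `G[ŝ].α* = max_{s ∈ G[ŝ]} α*(s)`, if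
`maxwt(G[ŝ]) · wtsum_m(w) < kScore*(ŝ) − G[ŝ].α* · U`, then
`maxwt_s(w) · wtsum_m(w) < kScore*(s) − α*(s)·U` for every `s ∈ G[ŝ]`; consequently,
for every `s ∈ G[ŝ]` for which `w` is the smallest common keyword of `S_s` and `M`,
`TSim(S_s, M) < kScore*(s) − α*(s)·U`, so no subscription after `ŝ` needs to be checked. -/
theorem early_termination_within_group {K ι : Type*} [LinearOrder K]
    (G : Finset ι)
    (Ssub : ι → Finset K) (wts : ι → K → ℝ)
    (kS αstar : ι → ℝ) (hαstar : ∀ s, 0 ≤ αstar s)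
    (U : ℝ) (hU : 0 ≤ U)
    (M : Finset K) (wtm : K → ℝ)
    (hs : ∀ s w, 0 ≤ wts s w) (hm : ∀ w, 0 ≤ wtm w)
    (w : K) (hwS : ∀ s ∈ G, w ∈ Ssub s)
    (shat : ι) (hshat : shat ∈ G)
    (hcond :
      (G.filter (fun s => kS shat ≤ kS s)).sup'
          (Finset.filter_nonempty_iff.mpr ⟨shat, hshat, le_refl _⟩)
          (fun s => maxwt (Ssub s) (wts s) w) * wtsum M wtm w <
        kS shat -
          (G.filter (fun s => kS shat ≤ kS s)).sup'
            (Finset.filter_nonempty_iff.mpr ⟨shat, hshat, le_refl _⟩) αstar * U) :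
    (∀ s ∈ G.filter (fun s => kS shat ≤ kS s),
        maxwt (Ssub s) (wts s) w * wtsum M wtm w < kS s - αstar s * U) ∧
    (∀ s ∈ G.filter (fun s => kS shat ≤ kS s),
        (w ∈ Ssub s ∩ M ∧ ∀ w' ∈ Ssub s ∩ M, w ≤ w') →
        TSim (Ssub s) M (wts s) wtm < kS s - αstar s * U) := by
    classical
  set GS := G.filter (fun s => kS shat ≤ kS s) with hGS
  have hne : GS.Nonempty := Finset.filter_nonempty_iff.mpr ⟨shat, hshat, le_refl _⟩
  have key : ∀ s ∈ GS, maxwt (Ssub s) (wts s) w * wtsum M wtm w < kS s - αstar s * U := by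
    intro s hsG
    obtain ⟨hsG', hks⟩ := Finset.mem_filter.mp hsG
    have h1 : maxwt (Ssub s) (wts s) w ≤ GS.sup' hne (fun s => maxwt (Ssub s) (wts s) w) :=
      Finset.le_sup' (f := fun s => maxwt (Ssub s) (wts s) w) hsG
    have h2 : αstar s ≤ GS.sup' hne αstar := Finset.le_sup' _ hsG
    have hwts : 0 ≤ wtsum M wtm w := wtsum_nonneg M wtm hm w
    calc maxwt (Ssub s) (wts s) w * wtsum M wtm w
        ≤ GS.sup' hne (fun s => maxwt (Ssub s) (wts s) w) * wtsum M wtm w :=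
          mul_le_mul_of_nonneg_right h1 hwts
      _ < kS shat - GS.sup' hne αstar * U := hcond
      _ ≤ kS s - αstar s * U := by nlinarith [mul_le_mul_of_nonneg_right h2 hU]
  refine ⟨key, fun s hsG hw => lt_of_le_of_lt ?_ (key s hsG)⟩
  obtain ⟨hwSM, hmin⟩ := hw
  have hsub : Ssub s ∩ M ⊆ M.filter (fun w' => w ≤ w') := by
    intro x hx
    exact Finset.mem_filter.mpr ⟨(Finset.mem_inter.mp hx).2, hmin x hx⟩
  calc TSim (Ssub s) M (wts s) wtm
      ≤ ∑ w' ∈ Ssub s ∩ M, maxwt (Ssub s) (wts s) w * wtm w' := by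
        refine Finset.sum_le_sum fun x hx => mul_le_mul_of_nonneg_right ?_ (hm x)
        exact le_maxwt_s7 (wts s) (Finset.mem_inter.mp hx).1 (hmin x hx)
    _ ≤ ∑ w' ∈ M.filter (fun w' => w ≤ w'), maxwt (Ssub s) (wts s) w * wtm w' :=
        Finset.sum_le_sum_of_subset_of_nonneg hsub
          (fun x _ _ => mul_nonneg (maxwt_nonneg _ _ _) (hm x))
    _ = maxwt (Ssub s) (wts s) w * wtsum M wtm w := by
        rw [wtsum, Finset.mul_sum]
end

section
/- Let α ∈ [0,1), kScore ∈ ℝ, and let S, M ⊆ K be keyword sets with S ∩ M ≠ ∅, nonnegative subscription weights wt_s and message weights wt_m with wt_m(w) ≤ 1 for all w, and spatial similarity SSim ≤ 1. Define the loose textual threshold λ_T = kScore/(1−α) − α/(1−α). If wtsum_s(w) < λ_T for every common keyword w ∈ S ∩ M (i.e., the loose prefix pref(s) = {w ∈ S : wtsum_s(w) ≥ λ_T} shares no keyword with M), then TSim(S,M) < λ_T and hence α·SSim + (1−α)·TSim(S,M) < kScore, so the message cannot be a top-k candidate of the subscription. Therefore it is correct to distribute each subscription s only to the subscription bolts whose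 keyword sets intersect pref(s) and each message only to the bolts whose keyword sets intersect M. (Correctness of prefix-based distribution; Lemma 7.) -/
open Finset

/-! The common keywords all lie above the least one, `w₀`, so the textual similarity, whose
message weights are at most `1`, is bounded by the subscription weight above `w₀`, which is
`wtsum_s(w₀) < λ_T`. The bound on the score is then linear arithmetic, using `SSim ≤ 1`. -/

section

variable {K : Type*} [LinearOrder K]

theorem TSim_le_sum_inter {S M : Finset K} {wts wtm : K → ℝ}
    (hs : ∀ w, 0 ≤ wts w) (hm1 : ∀ w, wtm w ≤ 1) :
    TSim S M wts wtm ≤ ∑ w ∈ S ∩ M, wts w :=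
  sum_le_sum fun w _ => mul_le_of_le_one_right (hs w) (hm1 w)

theorem sum_le_wtsum_of_subset {S T : Finset K} {wts : K → ℝ} {w : K}
    (hTS : T ⊆ S) (hwT : ∀ w' ∈ T, w ≤ w') (hs : ∀ w, 0 ≤ wts w) :
    ∑ w' ∈ T, wts w' ≤ wtsum S wts w :=
  sum_le_sum_of_subset_of_nonneg (fun w' hw' => mem_filter.2 ⟨hTS hw', hwT w' hw'⟩)
    fun w' _ _ => hs w'

theorem TSim_lt_of_forall_wtsum_lt {S M : Finset K} {wts wtm : K → ℝ} {c : ℝ}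
    (hne : (S ∩ M).Nonempty) (hs : ∀ w, 0 ≤ wts w) (hm1 : ∀ w, wtm w ≤ 1)
    (h : ∀ w ∈ S ∩ M, wtsum S wts w < c) :
    TSim S M wts wtm < c :=
  calc TSim S M wts wtm ≤ ∑ w ∈ S ∩ M, wts w := TSim_le_sum_inter hs hm1
    _ ≤ wtsum S wts ((S ∩ M).min' hne) :=
      sum_le_wtsum_of_subset inter_subset_left (fun _ hw => min'_le _ _ hw) hs
    _ < c := h _ (min'_mem _ hne)

end

theorem score_lt_of_lt_loose_threshold {α kScore SSim T : ℝ}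
    (hα0 : 0 ≤ α) (hα1 : α < 1) (hSSim : SSim ≤ 1)
    (hT : T < kScore / (1 - α) - α / (1 - α)) :
    α * SSim + (1 - α) * T < kScore := by
  have hpos : 0 < 1 - α := sub_pos.2 hα1
  have hscaled : (1 - α) * T < kScore - α := by
    rwa [← sub_div, lt_div_iff₀ hpos, mul_comm] at hT
  linarith [mul_le_of_le_one_right hα0 hSSim]

theorem prefix_based_distribution_correctness_general {K : Type*} [LinearOrder K]
    (S M : Finset K) (wts wtm : K → ℝ)
    (hne : (S ∩ M).Nonempty)
    (hs : ∀ w, 0 ≤ wts w) (hm1 : ∀ w, wtm w ≤ 1)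
    (α kScore SSim : ℝ)
    (hα0 : 0 ≤ α) (hα1 : α < 1) (hSSim : SSim ≤ 1)
    (h : ∀ w ∈ S ∩ M, wtsum S wts w < kScore / (1 - α) - α / (1 - α)) :
    TSim S M wts wtm < kScore / (1 - α) - α / (1 - α) ∧
      α * SSim + (1 - α) * TSim S M wts wtm < kScore := by
  have hT := TSim_lt_of_forall_wtsum_lt (wtm := wtm) hne hs hm1 h
  exact ⟨hT, score_lt_of_lt_loose_threshold hα0 hα1 hSSim hT⟩

/-- Lemma 7 (correctness of prefix-based distribution): with the loose textual
threshold `λ_T = kScore/(1−α) − α/(1−α)`, if every common keyword `w` of `S` and `M`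
has `wtsum_s(w) < λ_T` (i.e. the loose prefix of `s` shares no keyword with `M`),
then `TSim(S,M) < λ_T` and hence `α·SSim + (1−α)·TSim(S,M) < kScore`, so the message
cannot be a top-k candidate of the subscription. -/
theorem prefix_based_distribution_correctness {K : Type*} [LinearOrder K]
    (S M : Finset K) (wts wtm : K → ℝ)
    (hne : (S ∩ M).Nonempty)
    (hs : ∀ w, 0 ≤ wts w) (hm0 : ∀ w, 0 ≤ wtm w) (hm1 : ∀ w, wtm w ≤ 1)
    (α kScore SSim : ℝ)
    (hα0 : 0 ≤ α) (hα1 : α < 1) (hSSim : SSim ≤ 1)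
    (h : ∀ w ∈ S ∩ M, wtsum S wts w < kScore / (1 - α) - α / (1 - α)) :
    TSim S M wts wtm < kScore / (1 - α) - α / (1 - α) ∧
      α * SSim + (1 - α) * TSim S M wts wtm < kScore :=
  prefix_based_distribution_correctness_general S M wts wtm hne hs hm1 α kScore SSim hα0 hα1 hSSim h
end

section
/- Let W be a finite set of messages, k ∈ ℕ, and θ ∈ ℝ. Let B = {m ∈ W : score(m) ≥ θ} and let A be the k-skyband of B, i.e., A = {m ∈ B : fewer than k messages of B dominate m}. If |A| ≥ k, then the top-k of W is contained in A; that is, every message m ∈ W that is beaten by fewer than k messages of W belongs to A. Hence the top-k results can always be extracted from the partial k-skyband buffer whenever it contains at least k messages. (Theorem 5.) -/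
open Finset
open scoped Classical

/-- `m₁` dominates `m₂` if `score(m₁) ≥ score(m₂)` and `t(m₁) > t(m₂)`. -/
def dominates {Msg : Type*} (score t : Msg → ℝ) (m₁ m₂ : Msg) : Prop :=
  score m₂ ≤ score m₁ ∧ t m₂ < t m₁

/-- `m₁` beats `m₂` if `score(m₁) > score(m₂)`, or `score(m₁) = score(m₂)` and
`t(m₁) > t(m₂)` (ties in score broken by recency). -/
def beats {Msg : Type*} (score t : Msg → ℝ) (m₁ m₂ : Msg) : Prop :=
  score m₂ < score m₁ ∨ (score m₁ = score m₂ ∧ t m₂ < t m₁)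

/-- The k-skyband of a finite set `B` of messages: the messages of `B` dominated by
fewer than `k` messages of `B`. -/
noncomputable def skyband {Msg : Type*} (score t : Msg → ℝ) (k : ℕ)
    (B : Finset Msg) : Finset Msg :=
  B.filter (fun m => (B.filter (fun m' => dominates score t m' m)).card < k)

/-- The top-k of a finite set `W` of messages: the messages of `W` beaten by fewer
than `k` messages of `W`. -/
noncomputable def topk {Msg : Type*} (score t : Msg → ℝ) (k : ℕ)
    (W : Finset Msg) : Finset Msg :=
  W.filter (fun m => (W.filter (fun m' => beats score t m' m)).card < k)

/-- Theorem 5: let `B = {m ∈ W : score(m) ≥ θ}` and let `A` be the k-skyband of `B`.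
If `|A| ≥ k`, then the top-k of `W` is contained in `A`: the top-k results can always
be extracted from the partial k-skyband buffer whenever it holds at least `k` messages. -/
theorem topk_extractable_from_partial_skyband {Msg : Type*}
    (score t : Msg → ℝ) (W : Finset Msg) (k : ℕ) (θ : ℝ)
    (hcard : k ≤ (skyband score t k (W.filter (fun m => θ ≤ score m))).card) :
    topk score t k W ⊆ skyband score t k (W.filter (fun m => θ ≤ score m)) := by
  intro m hm
  rw [topk, mem_filter] at hm
  obtain ⟨hmW, hbeat⟩ := hm
  set B := W.filter (fun m => θ ≤ score m) with hB
  -- First: θ ≤ score m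
  have hθ : θ ≤ score m := by
    by_contra h
    push_neg at h
    have hsub : skyband score t k B ⊆ W.filter (fun m' => beats score t m' m) := by
      intro a ha
      rw [skyband, mem_filter, hB, mem_filter] at ha
      exact mem_filter.2 ⟨ha.1.1, Or.inl (lt_of_lt_of_le h ha.1.2)⟩
    exact absurd (le_trans hcard (card_le_card hsub)) (not_le.2 hbeat)
  rw [skyband, mem_filter]
  refine ⟨mem_filter.2 ⟨hmW, hθ⟩, ?_⟩
  have hsub : B.filter (fun m' => dominates score t m' m) ⊆
      W.filter (fun m' => beats score t m' m) := by
    intro a ha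
    rw [mem_filter, hB, mem_filter] at ha
    obtain ⟨⟨haW, _⟩, hle, hlt⟩ := ha
    refine mem_filter.2 ⟨haW, ?_⟩
    rcases lt_or_eq_of_le hle with h | h
    · exact Or.inl h
    · exact Or.inr ⟨h.symm, hlt⟩
  exact lt_of_le_of_lt (card_le_card hsub) hbeat
end

section
/- Let E be a real normed vector space (in particular the Euclidean plane ℝ²), let c ⊆ E be a closed set, and let s ∈ c and m ∉ c be points. Then infDist(s, frontier c) + infDist(m, c) ≤ dist(s, m), where infDist denotes the infimum distance from a point to a set and frontier c is the topological boundary of c. Consequently, for MaxDist > 0 with dist(s,m) ≤ MaxDist, the spatial upper bound SSimUB(s,m) = 1 − (infDist(s, frontier c) + infDist(m, c))/MaxDist satisfies SSimUB(s,m) ≥ SSim(s,m) = 1 − dist(s,m)/MaxDist. (Validity of the combined inner/outer spatial upper bound; Definitions 6–8.) -/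
/-- Validity of the combined inner/outer spatial upper bound (Definitions 6–8):
in a real normed vector space, for a closed set `c`, `s ∈ c` and `m ∉ c`,
`infDist(s, frontier c) + infDist(m, c) ≤ dist(s, m)`; consequently, for any
`MaxDist > 0` with `dist(s,m) ≤ MaxDist`, the spatial upper bound
`1 − (infDist(s, frontier c) + infDist(m, c))/MaxDist` dominates the spatial
similarity `1 − dist(s,m)/MaxDist`. -/
theorem combined_spatial_upper_bound_valid
    {E : Type*} [NormedAddCommGroup E] [NormedSpace ℝ E]
    (c : Set E) (hc : IsClosed c) (s m : E) (hs : s ∈ c) (hm : m ∉ c) :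
    Metric.infDist s (frontier c) + Metric.infDist m c ≤ dist s m ∧
    ∀ MaxDist : ℝ, 0 < MaxDist → dist s m ≤ MaxDist →
      1 - dist s m / MaxDist ≤
        1 - (Metric.infDist s (frontier c) + Metric.infDist m c) / MaxDist := by
  have key : Metric.infDist s (frontier c) + Metric.infDist m c ≤ dist s m := by
    set f : ℝ → E := fun t => s + t • (m - s) with hf
    have hfc : Continuous f := by fun_prop
    set T : Set ℝ := Set.Icc 0 1 ∩ f ⁻¹' c with hT
    have hT0 : (0 : ℝ) ∈ T := by
      constructor
      · exact Set.mem_Icc.2 ⟨le_refl 0, zero_le_one⟩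
      · simp [hf, hs]
    have hTne : T.Nonempty := ⟨0, hT0⟩
    have hTbdd : BddAbove T := ⟨1, fun t ht => ht.1.2⟩
    have hTclosed : IsClosed T := (isClosed_Icc).inter (hc.preimage hfc)
    set t0 : ℝ := sSup T with ht0
    have ht0T : t0 ∈ T := hTclosed.csSup_mem hTne hTbdd
    have ht0le : t0 ≤ 1 := ht0T.1.2
    have ht0ge : 0 ≤ t0 := ht0T.1.1
    have hft0c : f t0 ∈ c := ht0T.2
    have hf1 : f 1 = m := by simp [hf]
    have ht0lt : t0 < 1 := by
      rcases lt_or_eq_of_le ht0le with h | h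
      · exact h
      · exfalso; apply hm; rw [← hf1, ← h]; exact hft0c
    -- f t0 is in the closure of cᶜ
    have hfront : f t0 ∈ frontier c := by
      rw [frontier_eq_closure_inter_closure, hc.closure_eq]
      refine ⟨hft0c, ?_⟩
      have htend : Filter.Tendsto f (nhdsWithin t0 (Set.Ioi t0)) (nhds (f t0)) :=
        (hfc.tendsto t0).mono_left nhdsWithin_le_nhds
      refine mem_closure_of_tendsto htend ?_
      filter_upwards [Ioo_mem_nhdsGT_of_mem (Set.mem_Ico.2 ⟨le_refl t0, ht0lt⟩)] with t ht
      intro hmem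
      have : t ∈ T := ⟨Set.mem_Icc.2 ⟨ht0ge.trans ht.1.le, ht.2.le⟩, hmem⟩
      exact absurd (le_csSup hTbdd this) (not_le.2 ht.1)
    have hd1 : dist s (f t0) = t0 * dist s m := by
      have : s - f t0 = (-t0) • (m - s) := by
        rw [hf]; module
      rw [dist_eq_norm, this, norm_smul, norm_neg, Real.norm_eq_abs, abs_of_nonneg ht0ge,
        dist_eq_norm, norm_sub_rev]
    have hd2 : dist m (f t0) = (1 - t0) * dist s m := by
      have : m - f t0 = (1 - t0) • (m - s) := by
        rw [hf]; module
      rw [dist_eq_norm, this, norm_smul, Real.norm_eq_abs, abs_of_nonneg (by linarith),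
        dist_eq_norm, norm_sub_rev]
    have h1 : Metric.infDist s (frontier c) ≤ t0 * dist s m := by
      rw [← hd1]; exact Metric.infDist_le_dist_of_mem hfront
    have h2 : Metric.infDist m c ≤ (1 - t0) * dist s m := by
      rw [← hd2]; exact Metric.infDist_le_dist_of_mem hft0c
    nlinarith [dist_nonneg (x := s) (y := m)]
  refine ⟨key, fun MaxDist hM hle => ?_⟩
  have : (Metric.infDist s (frontier c) + Metric.infDist m c) / MaxDist ≤ dist s m / MaxDist := by
    gcongr
  linarith
end

section
/- Let W be a finite set of messages whose arrival times are pairwise distinct, and let k ∈ ℕ. Then the k-skyband of W contains at least min(|W|, k) messages: |{m ∈ W : fewer than k messages of W dominate m}| ≥ min(|W|, k). -/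
open Finset
open scoped Classical

/-- If the arrival times of the messages of `W` are pairwise distinct, the k-skyband
of `W` contains at least `min(|W|, k)` messages. -/
theorem skyband_card_ge_min {Msg : Type*}
    (score t : Msg → ℝ) (W : Finset Msg) (k : ℕ)
    (ht : ∀ m₁ ∈ W, ∀ m₂ ∈ W, t m₁ = t m₂ → m₁ = m₂) :
    min W.card k ≤ (skyband score t k W).card := by
  classical
  set f : Msg → ℕ := fun m => (W.filter (fun m' => beats score t m' m)).card with hf
  have htrans : ∀ a b c, beats score t a b → beats score t b c → beats score t a c := by
    intro a b c h1 h2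
    rcases h1 with h1 | ⟨h1, h1'⟩ <;> rcases h2 with h2 | ⟨h2, h2'⟩
    · exact Or.inl (h2.trans h1)
    · exact Or.inl (h2 ▸ h1)
    · exact Or.inl (h1 ▸ h2)
    · exact Or.inr ⟨h1.trans h2, h2'.trans h1'⟩
  have hirr : ∀ a, ¬ beats score t a a := by
    intro a h
    rcases h with h | ⟨_, h⟩ <;> exact lt_irrefl _ h
  have htri : ∀ a ∈ W, ∀ b ∈ W, a ≠ b → beats score t a b ∨ beats score t b a := by
    intro a ha b hb hne
    rcases lt_trichotomy (score a) (score b) with h | h | h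
    · exact Or.inr (Or.inl h)
    · rcases lt_trichotomy (t a) (t b) with h' | h' | h'
      · exact Or.inr (Or.inr ⟨h.symm, h'⟩)
      · exact absurd (ht a ha b hb h') hne
      · exact Or.inl (Or.inr ⟨h, h'⟩)
    · exact Or.inl (Or.inl h)
  have hlt : ∀ a ∈ W, ∀ b, beats score t a b → f a < f b := by
    intro a ha b hab
    apply Finset.card_lt_card
    constructor
    · intro x hx
      rw [Finset.mem_filter] at hx ⊢
      exact ⟨hx.1, htrans x a b hx.2 hab⟩
    · intro hsub
      have : a ∈ W.filter (fun m' => beats score t m' b) := Finset.mem_filter.mpr ⟨ha, hab⟩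
      have := hsub this
      rw [Finset.mem_filter] at this
      exact hirr a this.2
  have hinj : Set.InjOn f W := by
    intro a ha b hb hfab
    by_contra hne
    rcases htri a ha b hb hne with h | h
    · exact absurd hfab (Nat.ne_of_lt (hlt a ha b h))
    · exact absurd hfab.symm (Nat.ne_of_lt (hlt b hb a h))
  have hbound : ∀ m ∈ W, f m < W.card := by
    intro m hm
    have hsub : W.filter (fun m' => beats score t m' m) ⊆ W.erase m := by
      intro x hx
      rw [Finset.mem_filter] at hx
      refine Finset.mem_erase.mpr ⟨?_, hx.1⟩
      rintro rfl; exact hirr x hx.2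
    calc f m ≤ (W.erase m).card := Finset.card_le_card hsub
      _ < W.card := Finset.card_erase_lt_of_mem hm
  have himage : W.image f = Finset.range W.card := by
    apply Finset.eq_of_subset_of_card_le
    · intro x hx
      rw [Finset.mem_image] at hx
      obtain ⟨m, hm, rfl⟩ := hx
      exact Finset.mem_range.mpr (hbound m hm)
    · rw [Finset.card_range, Finset.card_image_of_injOn hinj]
  -- skyband contains topk-like set
  have hsub : W.filter (fun m => f m < k) ⊆ skyband score t k W := by
    intro m hm
    rw [Finset.mem_filter] at hm
    rw [skyband, Finset.mem_filter]
    refine ⟨hm.1, lt_of_le_of_lt ?_ hm.2⟩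
    apply Finset.card_le_card
    intro x hx
    rw [Finset.mem_filter] at hx ⊢
    refine ⟨hx.1, ?_⟩
    rcases hx.2 with ⟨hs, htt⟩
    rcases hs.lt_or_eq with h | h
    · exact Or.inl h
    · exact Or.inr ⟨h.symm, htt⟩
  have hcard : (W.filter (fun m => f m < k)).card = min W.card k := by
    have h1 : ((W.filter (fun m => f m < k)).image f) = (W.image f).filter (fun x => x < k) := by
      ext x
      simp only [Finset.mem_image, Finset.mem_filter]
      constructor
      · rintro ⟨m, ⟨hm, hmk⟩, rfl⟩; exact ⟨⟨m, hm, rfl⟩, hmk⟩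
      · rintro ⟨⟨m, hm, rfl⟩, hmk⟩; exact ⟨m, ⟨hm, hmk⟩, rfl⟩
    have h2 : (W.filter (fun m => f m < k)).card = ((W.filter (fun m => f m < k)).image f).card :=
      (Finset.card_image_of_injOn (hinj.mono (by
        intro x hx
        simp only [Finset.coe_filter, Set.mem_setOf_eq] at hx
        exact hx.1))).symm
    rw [h2, h1, himage]
    have : (Finset.range W.card).filter (fun x => x < k) = Finset.range (min W.card k) := by
      ext x; simp only [Finset.mem_filter, Finset.mem_range]; omega
    rw [this, Finset.card_range]
  calc min W.card k = (W.filter (fun m => f m < k)).card := hcard.symm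
    _ ≤ (skyband score t k W).card := Finset.card_le_card hsub
end

section
/- Let W be a finite set of messages whose arrival times are pairwise distinct, and let k ∈ ℕ. If the k-skyband of W contains fewer than k messages, then the k-skyband of W equals W itself (equivalently |W| < k, so no message of W is dominated by k or more messages). In particular, |k-skyband(W)| < k if and only if |W| < k; this is the key fact underlying the claim that top-k re-evaluation is triggered for the buffer with dominance-based eviction exactly when it is triggered for the buffer without eviction (Theorem 6). -/
open Finset
open scoped Classical

/-- If the arrival times of the messages of `W` are pairwise distinct and the
k-skyband of `W` contains fewer than `k` messages, then the k-skyband of `W` equals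
`W` itself; in particular `|k-skyband(W)| < k ↔ |W| < k` (the key fact underlying
Theorem 6). -/
theorem skyband_small_iff_window_small {Msg : Type*}
    (score t : Msg → ℝ) (W : Finset Msg) (k : ℕ)
    (ht : ∀ m₁ ∈ W, ∀ m₂ ∈ W, t m₁ = t m₂ → m₁ = m₂) :
    ((skyband score t k W).card < k → skyband score t k W = W) ∧
    ((skyband score t k W).card < k ↔ W.card < k) := by
  -- f m = number of messages of W arriving strictly later than m
  set f : Msg → ℕ := fun m => (W.filter (fun m' => t m < t m')).card with hf
  -- f is injective on W
  have hinj : Set.InjOn f W := by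
    intro a ha b hb hab
    by_contra hne
    have htne : t a ≠ t b := fun h => hne (ht a ha b hb h)
    rcases lt_or_gt_of_ne htne with h | h
    · have hss : W.filter (fun m' => t b < t m') ⊂ W.filter (fun m' => t a < t m') := by
        refine (Finset.ssubset_iff_of_subset ?_).2 ⟨b, ?_, ?_⟩
        · intro x hx
          rcases Finset.mem_filter.1 hx with ⟨hxW, hxl⟩
          exact Finset.mem_filter.2 ⟨hxW, lt_trans h hxl⟩
        · exact Finset.mem_filter.2 ⟨hb, h⟩
        · simp [Finset.mem_filter]
      have := Finset.card_lt_card hss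
      simp only [hf] at hab
      omega
    · have hss : W.filter (fun m' => t a < t m') ⊂ W.filter (fun m' => t b < t m') := by
        refine (Finset.ssubset_iff_of_subset ?_).2 ⟨a, ?_, ?_⟩
        · intro x hx
          rcases Finset.mem_filter.1 hx with ⟨hxW, hxl⟩
          exact Finset.mem_filter.2 ⟨hxW, lt_trans h hxl⟩
        · exact Finset.mem_filter.2 ⟨ha, h⟩
        · simp [Finset.mem_filter]
      have := Finset.card_lt_card hss
      simp only [hf] at hab
      omega
  -- f m < W.card for m ∈ W
  have hflt : ∀ m ∈ W, f m < W.card := by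
    intro m hm
    have hsub : W.filter (fun m' => t m < t m') ⊆ W.erase m := by
      intro x hx
      rcases Finset.mem_filter.1 hx with ⟨hxW, hxl⟩
      exact Finset.mem_erase.2 ⟨fun h => absurd (h ▸ hxl) (lt_irrefl _), hxW⟩
    calc f m ≤ (W.erase m).card := Finset.card_le_card hsub
      _ < W.card := Finset.card_erase_lt_of_mem hm
  -- image of W under f is exactly range W.card
  have himg : W.image f = Finset.range W.card := by
    apply Finset.eq_of_subset_of_card_le
    · intro i hi
      rcases Finset.mem_image.1 hi with ⟨m, hm, rfl⟩
      exact Finset.mem_range.2 (hflt m hm)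
    · rw [Finset.card_range, Finset.card_image_of_injOn hinj]
  -- key lower bound: if k ≤ W.card then k ≤ skyband.card
  have hkey : k ≤ W.card → k ≤ (skyband score t k W).card := by
    intro hk
    have hsub : W.filter (fun m => f m < k) ⊆ skyband score t k W := by
      intro m hm
      rcases Finset.mem_filter.1 hm with ⟨hmW, hmf⟩
      refine Finset.mem_filter.2 ⟨hmW, lt_of_le_of_lt ?_ hmf⟩
      apply Finset.card_le_card
      intro x hx
      rcases Finset.mem_filter.1 hx with ⟨hxW, hxd⟩
      exact Finset.mem_filter.2 ⟨hxW, hxd.2⟩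
    refine le_trans ?_ (Finset.card_le_card hsub)
    have : Finset.range k ⊆ (W.filter (fun m => f m < k)).image f := by
      intro i hi
      have hik : i < k := Finset.mem_range.1 hi
      have : i ∈ W.image f := by
        rw [himg]; exact Finset.mem_range.2 (lt_of_lt_of_le hik hk)
      rcases Finset.mem_image.1 this with ⟨m, hm, rfl⟩
      exact Finset.mem_image.2 ⟨m, Finset.mem_filter.2 ⟨hm, hik⟩, rfl⟩
    calc k = (Finset.range k).card := (Finset.card_range k).symm
      _ ≤ ((W.filter (fun m => f m < k)).image f).card := Finset.card_le_card this
      _ ≤ (W.filter (fun m => f m < k)).card := Finset.card_image_le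
  -- if W.card < k then skyband = W
  have hall : W.card < k → skyband score t k W = W := by
    intro hW
    apply Finset.filter_true_of_mem
    intro m hm
    have hsub : W.filter (fun m' => dominates score t m' m) ⊆ W.erase m := by
      intro x hx
      rcases Finset.mem_filter.1 hx with ⟨hxW, hxd⟩
      exact Finset.mem_erase.2 ⟨fun h => absurd (h ▸ hxd.2) (lt_irrefl _), hxW⟩
    calc (W.filter (fun m' => dominates score t m' m)).card
        ≤ (W.erase m).card := Finset.card_le_card hsub
      _ < W.card := Finset.card_erase_lt_of_mem hm
      _ < k := hW
  have hsmall : (skyband score t k W).card < k → W.card < k := by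
    intro h
    by_contra hW
    exact absurd h (not_lt.2 (hkey (not_lt.1 hW)))
  refine ⟨fun h => hall (hsmall h), ⟨hsmall, fun hW => ?_⟩⟩
  calc (skyband score t k W).card ≤ W.card :=
        Finset.card_le_card (Finset.filter_subset _ _)
    _ < k := hW
end
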